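/- Let k ≥ 1, let M and K be constant skew-symmetric real k×k matrices, δ > 0, H : ℝ^k → ℝ twice continuously differentiable, and let z : ℝ × ℝ × ℤ² → ℝ^k, (s,r,(i,j)) ↦ z_{i,j}(s,r), be differentiable in (s,r), satisfying for all (s,r) and all (i,j) ∈ ℤ² the centered box scheme M·(z̄⁰_{i+1,j} − z̄⁰_{i,j})/δ + K·(z̄¹_{i,j+1} − z̄¹_{i,j})/δ = ∇H(c_{i,j}), where z̄⁰_{i,j} = (z_{i,j} + z_{i,j+1})/2, z̄¹_{i,j} = (z_{i,j} + z_{i+1,j})/2, and c_{i,j} = (z_{i,j} + z_{i+1,j} + z_{i,j+1} + z_{i+1,j+1})/4. Define ω_{i,j}(s,r) = ⟨ M·∂_s z̄⁰_{i,j}, ∂_r z̄⁰_{i,j} ⟩ and κ_{i,j}(s,r) = ⟨ K·∂_s z̄¹_{i,j}, ∂_r z̄¹_{i,j} ⟩. Then the discrete multi-symplectic conservation law holds exactly: for all (s,r) and all (i,j), (ω_{i+1,j} − ω_{i,j})/δ + (κ_{i,j+1} − κ_{i,j})/δ = 0. -/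

import Mathlib

open Matrix

/-- Edge average along the second lattice direction:
`z̄⁰_{i,j} = (z_{i,j} + z_{i,j+1})/2`. -/
noncomputable def zbar0 (k : ℕ) (z : ℝ × ℝ → ℤ × ℤ → (Fin k → ℝ))
    (p : ℝ × ℝ) (i j : ℤ) : Fin k → ℝ :=
  (z p (i, j) + z p (i, j + 1)) / 2

/-- Edge average along the first lattice direction:
`z̄¹_{i,j} = (z_{i,j} + z_{i+1,j})/2`. -/
noncomputable def zbar1 (k : ℕ) (z : ℝ × ℝ → ℤ × ℤ → (Fin k → ℝ))
    (p : ℝ × ℝ) (i j : ℤ) : Fin k → ℝ :=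
  (z p (i, j) + z p (i + 1, j)) / 2

/-- Cell average `c_{i,j} = (z_{i,j} + z_{i+1,j} + z_{i,j+1} + z_{i+1,j+1})/4`. -/
noncomputable def cav (k : ℕ) (z : ℝ × ℝ → ℤ × ℤ → (Fin k → ℝ))
    (p : ℝ × ℝ) (i j : ℤ) : Fin k → ℝ :=
  (z p (i, j) + z p (i + 1, j) + z p (i, j + 1) + z p (i + 1, j + 1)) / 4

/-- The discrete 2-form `ω_{i,j} = ⟨M ∂_s z̄⁰_{i,j}, ∂_r z̄⁰_{i,j}⟩`. -/
noncomputable def omg (k : ℕ) (M : Matrix (Fin k) (Fin k) ℝ)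
    (z : ℝ × ℝ → ℤ × ℤ → (Fin k → ℝ)) (p : ℝ × ℝ) (i j : ℤ) : ℝ :=
  ∑ a, M.mulVec (fderiv ℝ (fun q => zbar0 k z q i j) p (1, 0)) a
      * fderiv ℝ (fun q => zbar0 k z q i j) p (0, 1) a

/-- The discrete 2-form `κ_{i,j} = ⟨K ∂_s z̄¹_{i,j}, ∂_r z̄¹_{i,j}⟩`. -/
noncomputable def kap (k : ℕ) (K : Matrix (Fin k) (Fin k) ℝ)
    (z : ℝ × ℝ → ℤ × ℤ → (Fin k → ℝ)) (p : ℝ × ℝ) (i j : ℤ) : ℝ :=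
  ∑ a, K.mulVec (fderiv ℝ (fun q => zbar1 k z q i j) p (1, 0)) a
      * fderiv ℝ (fun q => zbar1 k z q i j) p (0, 1) a

/-!
Differentiating the scheme along the two parameter directions gives the variational equations:
the scheme applied to the variations `u = ∂_s z`, `v = ∂_r z` equals the Hessian of `H` at the cell
average applied to the cell average of the variation. Pairing the `u`-equation with the cell
average of `v` and the `v`-equation with that of `u` and subtracting, the Hessian terms cancel by
symmetry of second derivatives. Since the cell average is the mean of the two opposite edge
averages in either lattice direction, skew-symmetry of `M` and `K` turns what remains into exactly
the difference quotients of `ω` and `κ`.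
-/

section Calculus
variable {E ι : Type*} [NormedAddCommGroup E] [NormedSpace ℝ E] [Fintype ι] {p : E}

theorem fderiv_div_const_apply {f : E → ι → ℝ} (hf : DifferentiableAt ℝ f p) (c : ι → ℝ)
    (e : E) : fderiv ℝ (fun q => f q / c) p e = fderiv ℝ f p e / c := by
  simp only [div_eq_mul_inv, fderiv_mul_const hf, _root_.smul_apply, smul_eq_mul, mul_comm]

theorem HasFDerivAt.matrix_mulVec {m : Type*} [Fintype m] [DecidableEq ι] (A : Matrix m ι ℝ)
    {f : E → ι → ℝ} {f' : E →L[ℝ] ι → ℝ} (hf : HasFDerivAt f f' p) :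
    HasFDerivAt (fun q => A *ᵥ f q) ((Matrix.toLin' A).toContinuousLinearMap.comp f') p :=
  (Matrix.toLin' A).toContinuousLinearMap.hasFDerivAt.comp p hf

theorem HasFDerivAt.apply_single [DecidableEq ι] {φ : E → (ι → ℝ) →L[ℝ] ℝ}
    {φ' : E →L[ℝ] (ι → ℝ) →L[ℝ] ℝ} (hφ : HasFDerivAt φ φ' p) :
    HasFDerivAt (fun q a => φ q (Pi.single a 1))
      ((ContinuousLinearMap.pi fun a => ContinuousLinearMap.apply ℝ ℝ (Pi.single a 1)).comp φ') p :=
  (ContinuousLinearMap.pi fun a => ContinuousLinearMap.apply ℝ ℝ (Pi.single a 1)).hasFDerivAt.comp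
    (f := φ) p hφ

theorem apply_single_dotProduct [DecidableEq ι] (φ : (ι → ℝ) →L[ℝ] ℝ) (v : ι → ℝ) :
    (fun a => φ (Pi.single a 1)) ⬝ᵥ v = φ v := by
  conv_rhs => rw [← Finset.univ_sum_single v]
  simp only [dotProduct, map_sum]
  refine Finset.sum_congr rfl fun a _ => ?_
  rw [mul_comm, ← smul_eq_mul, ← map_smul, ← Pi.single_smul', smul_eq_mul, mul_one]

end Calculus

section SkewSymmetric
variable {ι : Type*} [Fintype ι] {A : Matrix ι ι ℝ}

theorem Matrix.mulVec_dotProduct_of_transpose_eq_neg (hA : Aᵀ = -A) (x y : ι → ℝ) :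
    (A *ᵥ x) ⬝ᵥ y = -((A *ᵥ y) ⬝ᵥ x) := by
  rw [dotProduct_comm, dotProduct_mulVec, ← mulVec_transpose, hA, neg_mulVec, neg_dotProduct]

theorem Matrix.mulVec_sub_dotProduct_add_sub_of_transpose_eq_neg (hA : Aᵀ = -A)
    (a₀ a₁ b₀ b₁ : ι → ℝ) :
    (A *ᵥ (a₁ - a₀)) ⬝ᵥ (b₁ + b₀) - (A *ᵥ (b₁ - b₀)) ⬝ᵥ (a₁ + a₀)
      = 2 * ((A *ᵥ a₁) ⬝ᵥ b₁ - (A *ᵥ a₀) ⬝ᵥ b₀) := by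
  simp only [mulVec_sub, sub_dotProduct, dotProduct_add,
    A.mulVec_dotProduct_of_transpose_eq_neg hA b₁, A.mulVec_dotProduct_of_transpose_eq_neg hA b₀]
  ring

end SkewSymmetric

section Lattice
variable {k : ℕ}

theorem zbar0_succ_add_zbar0 (z : ℝ × ℝ → ℤ × ℤ → (Fin k → ℝ)) (p : ℝ × ℝ) (i j : ℤ) :
    zbar0 k z p (i + 1) j + zbar0 k z p i j = (2 : ℝ) • cav k z p i j := by
  funext a
  simp only [zbar0, cav, Pi.add_apply, Pi.div_apply, Pi.smul_apply, Pi.ofNat_apply, smul_eq_mul]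
  ring

theorem zbar1_succ_add_zbar1 (z : ℝ × ℝ → ℤ × ℤ → (Fin k → ℝ)) (p : ℝ × ℝ) (i j : ℤ) :
    zbar1 k z p i (j + 1) + zbar1 k z p i j = (2 : ℝ) • cav k z p i j := by
  funext a
  simp only [zbar1, cav, Pi.add_apply, Pi.div_apply, Pi.smul_apply, Pi.ofNat_apply, smul_eq_mul]
  ring

theorem box_conservation_of_variational {M K : Matrix (Fin k) (Fin k) ℝ} (hM : Mᵀ = -M)
    (hK : Kᵀ = -K) {δ : ℝ} (u v : ℝ × ℝ → ℤ × ℤ → (Fin k → ℝ)) (p : ℝ × ℝ) (i j : ℤ)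
    {Su Sv : Fin k → ℝ}
    (hu : M *ᵥ (δ⁻¹ • (zbar0 k u p (i + 1) j - zbar0 k u p i j))
        + K *ᵥ (δ⁻¹ • (zbar1 k u p i (j + 1) - zbar1 k u p i j)) = Su)
    (hv : M *ᵥ (δ⁻¹ • (zbar0 k v p (i + 1) j - zbar0 k v p i j))
        + K *ᵥ (δ⁻¹ • (zbar1 k v p i (j + 1) - zbar1 k v p i j)) = Sv)
    (hS : Su ⬝ᵥ cav k v p i j = Sv ⬝ᵥ cav k u p i j) :
    δ⁻¹ * ((M *ᵥ zbar0 k u p (i + 1) j) ⬝ᵥ zbar0 k v p (i + 1) j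
        - (M *ᵥ zbar0 k u p i j) ⬝ᵥ zbar0 k v p i j)
      + δ⁻¹ * ((K *ᵥ zbar1 k u p i (j + 1)) ⬝ᵥ zbar1 k v p i (j + 1)
        - (K *ᵥ zbar1 k u p i j) ⬝ᵥ zbar1 k v p i j) = 0 := by
  have hMω := M.mulVec_sub_dotProduct_add_sub_of_transpose_eq_neg hM
    (zbar0 k u p i j) (zbar0 k u p (i + 1) j) (zbar0 k v p i j) (zbar0 k v p (i + 1) j)
  have hKκ := K.mulVec_sub_dotProduct_add_sub_of_transpose_eq_neg hK
    (zbar1 k u p i j) (zbar1 k u p i (j + 1)) (zbar1 k v p i j) (zbar1 k v p i (j + 1))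
  rw [zbar0_succ_add_zbar0, zbar0_succ_add_zbar0] at hMω
  rw [zbar1_succ_add_zbar1, zbar1_succ_add_zbar1] at hKκ
  have hu' := congrArg (· ⬝ᵥ cav k v p i j) hu
  have hv' := congrArg (· ⬝ᵥ cav k u p i j) hv
  simp only [dotProduct_smul, smul_eq_mul] at hMω hKκ
  simp only [add_dotProduct, mulVec_smul, smul_dotProduct, smul_eq_mul] at hu' hv'
  linear_combination hu' - hv' + hS - δ⁻¹ / 2 * (hMω + hKκ)

end Lattice

section Variation
variable {k : ℕ} {z : ℝ × ℝ → ℤ × ℤ → (Fin k → ℝ)} {p : ℝ × ℝ}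

/-- The variation `∂_e z` at `p`, taken constant in the parameter so that `zbar0`, `zbar1` and
`cav` apply to it. -/
noncomputable def variation (z : ℝ × ℝ → ℤ × ℤ → (Fin k → ℝ)) (p e : ℝ × ℝ) :
    ℝ × ℝ → ℤ × ℤ → (Fin k → ℝ) :=
  fun _ ij => fderiv ℝ (fun q => z q ij) p e

variable (hz : ∀ ij, DifferentiableAt ℝ (fun q => z q ij) p)
include hz

theorem differentiableAt_zbar0 (i j : ℤ) : DifferentiableAt ℝ (fun q => zbar0 k z q i j) p := by
  have := hz (i, j); have := hz (i, j + 1)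
  simp only [zbar0, div_eq_mul_inv]; fun_prop

theorem differentiableAt_zbar1 (i j : ℤ) : DifferentiableAt ℝ (fun q => zbar1 k z q i j) p := by
  have := hz (i, j); have := hz (i + 1, j)
  simp only [zbar1, div_eq_mul_inv]; fun_prop

theorem differentiableAt_cav (i j : ℤ) : DifferentiableAt ℝ (fun q => cav k z q i j) p := by
  have := hz (i, j); have := hz (i + 1, j); have := hz (i, j + 1); have := hz (i + 1, j + 1)
  simp only [cav, div_eq_mul_inv]; fun_prop

theorem fderiv_zbar0_apply (i j : ℤ) (e : ℝ × ℝ) :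
    fderiv ℝ (fun q => zbar0 k z q i j) p e = zbar0 k (variation z p e) p i j := by
  simp only [zbar0]
  rw [fderiv_div_const_apply (f := fun q => z q (i, j) + z q (i, j + 1)) ((hz _).add (hz _)),
    fderiv_fun_add (hz _) (hz _)]
  rfl

theorem fderiv_zbar1_apply (i j : ℤ) (e : ℝ × ℝ) :
    fderiv ℝ (fun q => zbar1 k z q i j) p e = zbar1 k (variation z p e) p i j := by
  simp only [zbar1]
  rw [fderiv_div_const_apply (f := fun q => z q (i, j) + z q (i + 1, j)) ((hz _).add (hz _)),
    fderiv_fun_add (hz _) (hz _)]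
  rfl

theorem fderiv_cav_apply (i j : ℤ) (e : ℝ × ℝ) :
    fderiv ℝ (fun q => cav k z q i j) p e = cav k (variation z p e) p i j := by
  simp only [cav]
  rw [fderiv_div_const_apply (f := fun q => z q (i, j) + z q (i + 1, j) + z q (i, j + 1)
      + z q (i + 1, j + 1)) ((((hz _).add (hz _)).add (hz _)).add (hz _)),
    fderiv_fun_add (((hz _).fun_add (hz _)).fun_add (hz _)) (hz _),
    fderiv_fun_add ((hz _).fun_add (hz _)) (hz _), fderiv_fun_add (hz _) (hz _)]
  rfl

theorem box_scheme_variation {M K : Matrix (Fin k) (Fin k) ℝ} {δ : ℝ} {H : (Fin k → ℝ) → ℝ}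
    {i j : ℤ} (hH : DifferentiableAt ℝ (fderiv ℝ H) (cav k z p i j))
    (hscheme : ∀ q, M *ᵥ (δ⁻¹ • (zbar0 k z q (i + 1) j - zbar0 k z q i j))
        + K *ᵥ (δ⁻¹ • (zbar1 k z q i (j + 1) - zbar1 k z q i j))
        = fun a => fderiv ℝ H (cav k z q i j) (Pi.single a 1))
    (e : ℝ × ℝ) :
    M *ᵥ (δ⁻¹ • (zbar0 k (variation z p e) p (i + 1) j - zbar0 k (variation z p e) p i j))
        + K *ᵥ (δ⁻¹ • (zbar1 k (variation z p e) p i (j + 1) - zbar1 k (variation z p e) p i j))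
      = fun a => fderiv ℝ (fderiv ℝ H) (cav k z p i j) (cav k (variation z p e) p i j)
          (Pi.single a 1) := by
  have hR := (hH.hasFDerivAt.comp p (differentiableAt_cav hz i j).hasFDerivAt).apply_single
  have hL := ((((differentiableAt_zbar0 hz (i + 1) j).hasFDerivAt.sub
      (differentiableAt_zbar0 hz i j).hasFDerivAt).const_smul δ⁻¹).matrix_mulVec M).add
    ((((differentiableAt_zbar1 hz i (j + 1)).hasFDerivAt.sub
      (differentiableAt_zbar1 hz i j).hasFDerivAt).const_smul δ⁻¹).matrix_mulVec K)
  have hLR := congrArg (· e) (hL.unique (hR.congr_of_eventuallyEq (.of_forall hscheme)))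
  simpa [fderiv_zbar0_apply hz, fderiv_zbar1_apply hz, fderiv_cav_apply hz, mulVec_smul,
    mulVec_sub] using hLR

end Variation

theorem centered_box_multisymplectic_general
    (k : ℕ)
    (M K : Matrix (Fin k) (Fin k) ℝ) (hM : Mᵀ = -M) (hK : Kᵀ = -K)
    (δ : ℝ)
    (H : (Fin k → ℝ) → ℝ) (hH : ContDiff ℝ 2 H)
    (z : ℝ × ℝ → ℤ × ℤ → (Fin k → ℝ))
    (hz : ∀ ij : ℤ × ℤ, ContDiff ℝ 1 (fun p => z p ij))
    (hscheme : ∀ (p : ℝ × ℝ) (i j : ℤ),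
      M.mulVec (δ⁻¹ • (zbar0 k z p (i + 1) j - zbar0 k z p i j))
        + K.mulVec (δ⁻¹ • (zbar1 k z p i (j + 1) - zbar1 k z p i j))
        = fun a => fderiv ℝ H (cav k z p i j) (Pi.single a 1)) :
    ∀ (p : ℝ × ℝ) (i j : ℤ),
      δ⁻¹ * (omg k M z p (i + 1) j - omg k M z p i j)
        + δ⁻¹ * (kap k K z p i (j + 1) - kap k K z p i j) = 0 := by
  intro p i j
  have hzp (ij : ℤ × ℤ) : DifferentiableAt ℝ (fun q => z q ij) p :=
    (hz ij).differentiable one_ne_zero p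
  set c := cav k z p i j
  have hH' : DifferentiableAt ℝ (fderiv ℝ H) c :=
    (hH.fderiv_right (m := 1) le_rfl).differentiable one_ne_zero c
  have hHessian_symm : IsSymmSndFDerivAt ℝ H c := hH.contDiffAt.isSymmSndFDerivAt (by simp)
  have hconserved := box_conservation_of_variational hM hK
    (variation z p (1, 0)) (variation z p (0, 1)) p i j
    (box_scheme_variation hzp hH' (fun q => hscheme q i j) (1, 0))
    (box_scheme_variation hzp hH' (fun q => hscheme q i j) (0, 1))
    (by rw [apply_single_dotProduct, apply_single_dotProduct, hHessian_symm])
  simpa only [omg, kap, fderiv_zbar0_apply hzp, fderiv_zbar1_apply hzp, dotProduct]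
    using hconserved

/-- **The centered box scheme is a multi-symplectic integrator.**  For a
Hamiltonian PDE `M ∂₀ζ + K ∂₁ζ = ∇H(ζ)` in 1+1 dimensions with `M, K`
constant skew-symmetric, if a two-parameter family of discrete solutions
satisfies the centered box scheme, then the discrete multi-symplectic
conservation law `(ω_{i+1,j} − ω_{i,j})/δ + (κ_{i,j+1} − κ_{i,j})/δ = 0`
holds exactly. -/
theorem centered_box_multisymplectic
    (k : ℕ) (hk : 1 ≤ k)
    (M K : Matrix (Fin k) (Fin k) ℝ) (hM : Mᵀ = -M) (hK : Kᵀ = -K)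
    (δ : ℝ) (hδ : 0 < δ)
    (H : (Fin k → ℝ) → ℝ) (hH : ContDiff ℝ 2 H)
    (z : ℝ × ℝ → ℤ × ℤ → (Fin k → ℝ))
    (hz : ∀ ij : ℤ × ℤ, ContDiff ℝ 1 (fun p => z p ij))
    (hscheme : ∀ (p : ℝ × ℝ) (i j : ℤ),
      M.mulVec (δ⁻¹ • (zbar0 k z p (i + 1) j - zbar0 k z p i j))
        + K.mulVec (δ⁻¹ • (zbar1 k z p i (j + 1) - zbar1 k z p i j))
        = fun a => fderiv ℝ H (cav k z p i j) (Pi.single a 1)) :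
    ∀ (p : ℝ × ℝ) (i j : ℤ),
      δ⁻¹ * (omg k M z p (i + 1) j - omg k M z p i j)
        + δ⁻¹ * (kap k K z p i (j + 1) - kap k K z p i j) = 0 :=
  centered_box_multisymplectic_general k M K hM hK δ H hH z hz hscheme
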